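/- If φ : u_n → u_n is a Lie algebra homomorphism, then φ(u_{n,i}) ⊆ u_{n,i} for all i = 1,...,n; i.e., φ preserves each term of the derived series. -/

import Mathlib

open MvPolynomial

noncomputable section

/-- The polynomial algebra `Pₙ = K[x₀,…,x_{n-1}]`. -/
abbrev Pn (K : Type) [Field K] (n : ℕ) : Type := MvPolynomial (Fin n) K

/-- The Lie algebra of `K`-derivations of `Pₙ`. -/
abbrev DerPn (K : Type) [Field K] (n : ℕ) : Type :=
  Derivation K (Pn K n) (Pn K n)

/-- The subalgebra `P_j = K[x₀,…,x_{j-1}]` of `Pₙ` (0-indexed: variables with index `< j`). -/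
def Psub (K : Type) [Field K] (n j : ℕ) : Subalgebra K (Pn K n) :=
  MvPolynomial.supported K {k : Fin n | (k : ℕ) < j}

/-- The subspace `u_{n,i} = Σ_{j=i}^n P_{j-1}∂_j` (1-indexed `i`; `U K n 1 = u_n`).
A derivation `D` lies in it iff `D(x_j) ∈ P_{j-1}` for all `j` and `D(x_j) = 0` for `j < i`
(0-indexed: `D (X j) = 0` when `(j:ℕ)+1 < i`). -/
def U (K : Type) [Field K] (n i : ℕ) : Submodule K (DerPn K n) where
  carrier := {D | ∀ j : Fin n, D (X j) ∈ Psub K n j ∧ ((j : ℕ) + 1 < i → D (X j) = 0)}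
  add_mem' := by
    intro a b ha hb j
    refine ⟨?_, fun h => ?_⟩
    · simpa using Subalgebra.add_mem _ (ha j).1 (hb j).1
    · simp [(ha j).2 h, (hb j).2 h]
  zero_mem' := by
    intro j
    refine ⟨by simpa using (Psub K n j).zero_mem, fun _ => rfl⟩
  smul_mem' := by
    intro c a ha j
    refine ⟨?_, fun h => ?_⟩
    · simpa using Subalgebra.smul_mem _ (ha j).1 c
    · simp [(ha j).2 h]

/-- The span of all brackets `⁅a,b⁆` with `a ∈ A`, `b ∈ B`. -/
def lieSpan (K : Type) [Field K] (n : ℕ) (A B : Submodule K (DerPn K n)) :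
    Submodule K (DerPn K n) :=
  Submodule.span K {x | ∃ a ∈ A, ∃ b ∈ B, x = ⁅a, b⁆}

/-- The derived series of a subspace `G`: `G_{(0)} = G`, `G_{(i+1)} = [G_{(i)}, G_{(i)}]`. -/
def derivedSub (K : Type) [Field K] (n : ℕ) (G : Submodule K (DerPn K n)) : ℕ → Submodule K (DerPn K n)
  | 0 => G
  | i + 1 => lieSpan K n (derivedSub K n G i) (derivedSub K n G i)

/-!
For `i ≥ 1` one has `u_{n,i+1} = [u_{n,i}, u_{n,i}]`. The inclusion `⊇` holds because a
derivation vanishing on `x₁,…,x_{j-1}` kills `P_{j-1}`. For `⊆`, a summand `f ∂ⱼ` with `j > i` is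
`[∂ᵢ, (∫ f dxᵢ) ∂ⱼ]`, and integrating needs characteristic zero. Hence `u_{n,i}` is the
`(i-1)`-th derived algebra of `u_n`, which every Lie algebra endomorphism preserves.
-/

namespace MvPolynomial

variable {σ K : Type*} [Field K]

theorem derivation_map_mem_supported {s : Set σ}
    (D : Derivation K (MvPolynomial σ K) (MvPolynomial σ K)) (hD : ∀ k ∈ s, D (X k) ∈ supported K s)
    {p : MvPolynomial σ K} (hp : p ∈ supported K s) :
    D p ∈ supported K s := by
  induction hp using Algebra.adjoin_induction with
  | mem x hx =>
    obtain ⟨k, hk, rfl⟩ := hx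
    exact hD k hk
  | algebraMap r => simp
  | add x y _ _ hx hy => simpa using add_mem hx hy
  | mul x y hx' hy' hx hy =>
    rw [Derivation.leibniz, smul_eq_mul, smul_eq_mul]
    exact add_mem (mul_mem hx' hy) (mul_mem hy' hx)

theorem derivation_eq_zero_of_mem_supported {s : Set σ}
    {D : Derivation K (MvPolynomial σ K) (MvPolynomial σ K)} (hD : ∀ k ∈ s, D (X k) = 0)
    {p : MvPolynomial σ K} (hp : p ∈ supported K s) : D p = 0 :=
  derivation_eqOn_supported (D₂ := 0) (fun k hk => by simpa using hD k hk) hp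

theorem monomial_mem_supported {s : Set σ} {m : σ →₀ ℕ} (hm : ↑m.support ⊆ s) (c : K) :
    monomial m c ∈ supported K s := by
  rcases eq_or_ne c 0 with rfl | hc
  · simp
  · rwa [mem_supported, vars_monomial hc]

theorem derivation_eq_sum_smul_pderiv [Fintype σ]
    (D : Derivation K (MvPolynomial σ K) (MvPolynomial σ K)) :
    D = ∑ k, D (X k) • pderiv k := by
  refine derivation_ext fun j => ?_
  rw [← Derivation.coeFnAddMonoidHom_apply (∑ k, _), map_sum, Finset.sum_apply,
    Finset.sum_eq_single j]
  · simp
  · intro k _ hk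
    simp [pderiv_X_of_ne (Ne.symm hk)]
  · simp

theorem lie_pderiv_smul_pderiv (k j : σ) (F : MvPolynomial σ K) :
    ⁅(pderiv k : Derivation K (MvPolynomial σ K) (MvPolynomial σ K)),
      F • (pderiv j : Derivation K (MvPolynomial σ K) (MvPolynomial σ K))⁆ =
      pderiv k F • (pderiv j : Derivation K (MvPolynomial σ K) (MvPolynomial σ K)) := by
  classical
  refine derivation_ext fun m => ?_
  rw [Derivation.commutator_apply]
  by_cases hjm : j = m <;> by_cases hkm : k = m <;> simp [pderiv_X, hjm, hkm]

def antideriv (k : σ) (f : MvPolynomial σ K) : MvPolynomial σ K :=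
  ∑ m ∈ f.support, monomial (m + Finsupp.single k 1) (f.coeff m / ((m k : K) + 1))

theorem pderiv_antideriv [CharZero K] (k : σ) (f : MvPolynomial σ K) :
    pderiv k (antideriv k f) = f := by
  classical
  conv_rhs => rw [← f.support_sum_monomial_coeff]
  refine (map_sum _ _ _).trans (Finset.sum_congr rfl fun m _ => ?_)
  rw [pderiv_monomial, add_tsub_cancel_right]
  congr 1
  simp only [Finsupp.add_apply, Finsupp.single_eq_same, Nat.cast_add, Nat.cast_one]
  exact div_mul_cancel₀ _ (Nat.cast_add_one_ne_zero (m k))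

theorem antideriv_mem_supported {s : Set σ} {k : σ} (hk : k ∈ s) {f : MvPolynomial σ K}
    (hf : f ∈ supported K s) : antideriv k f ∈ supported K s := by
  refine Subalgebra.sum_mem _ fun m hm => ?_
  rw [monomial_add_single, pow_one]
  refine mul_mem (monomial_mem_supported (fun l hl => ?_) _) ((X_mem_supported).2 hk)
  exact mem_supported.1 hf ((mem_vars_iff_mem_support l).2 ⟨m, hm, hl⟩)

end MvPolynomial

section UnitriangularDerivations

variable {K : Type} [Field K] {n : ℕ}

theorem Psub_mono {j j' : ℕ} (h : j ≤ j') : Psub K n j ≤ Psub K n j' :=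
  supported_mono fun _ hk => lt_of_lt_of_le hk h

theorem smul_pderiv_mem_U {i : ℕ} {j : Fin n} {f : Pn K n} (hf : f ∈ Psub K n j)
    (hij : i ≤ j + 1) : f • (pderiv j : DerPn K n) ∈ U K n i := by
  intro m
  rcases eq_or_ne m j with rfl | hm
  · simp only [Derivation.smul_apply, pderiv_X_self, smul_eq_mul, mul_one]
    exact ⟨hf, by omega⟩
  · simp only [Derivation.smul_apply, pderiv_X_of_ne hm, smul_zero]
    exact ⟨zero_mem _, fun _ => trivial⟩

theorem lie_mem_U_succ {i : ℕ} {D E : DerPn K n} (hD : D ∈ U K n i) (hE : E ∈ U K n i) :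
    ⁅D, E⁆ ∈ U K n (i + 1) := by
  intro j
  have hPsub : ∀ F ∈ U K n i, ∀ k ∈ {k : Fin n | (k : ℕ) < j}, F (X k) ∈ Psub K n j :=
    fun F hF k hk => Psub_mono (le_of_lt hk) (hF k).1
  rw [Derivation.commutator_apply]
  refine ⟨sub_mem (derivation_map_mem_supported D (hPsub D hD) (hE j).1)
    (derivation_map_mem_supported E (hPsub E hE) (hD j).1), fun hj => ?_⟩
  have hzero : ∀ F ∈ U K n i, ∀ k ∈ {k : Fin n | (k : ℕ) < j}, F (X k) = 0 :=
    fun F hF k hk => (hF k).2 (by simp only [Set.mem_ofPred_eq] at hk; omega)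
  rw [derivation_eq_zero_of_mem_supported (hzero D hD) (hE j).1,
    derivation_eq_zero_of_mem_supported (hzero E hE) (hD j).1, sub_zero]

theorem lieSpan_U_le (i : ℕ) : lieSpan K n (U K n i) (U K n i) ≤ U K n (i + 1) := by
  rw [lieSpan, Submodule.span_le]
  rintro _ ⟨D, hD, E, hE, rfl⟩
  exact lie_mem_U_succ hD hE

theorem U_succ_le_lieSpan [CharZero K] {i : ℕ} (hi : 1 ≤ i) :
    U K n (i + 1) ≤ lieSpan K n (U K n i) (U K n i) := by
  intro D hD
  rw [derivation_eq_sum_smul_pderiv D]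
  refine Submodule.sum_mem _ fun j _ => ?_
  by_cases hj : (j : ℕ) < i
  · rw [(hD j).2 (by omega), zero_smul]
    exact zero_mem _
  -- `f ∂ⱼ = ⁅∂ₖ, (∫ f dxₖ) ∂ⱼ⁆` with `k = i - 1 < j`, and both factors lie in `U i`.
  let k : Fin n := ⟨i - 1, by omega⟩
  have hk : k ∈ {k : Fin n | (k : ℕ) < j} := by simp only [Set.mem_ofPred_eq, k]; omega
  have hbracket : D (X j) • (pderiv j : DerPn K n) =
      ⁅(1 : Pn K n) • (pderiv k : DerPn K n), antideriv k (D (X j)) • pderiv j⁆ := by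
    rw [one_smul, lie_pderiv_smul_pderiv, pderiv_antideriv]
  rw [hbracket]
  exact Submodule.subset_span ⟨_, smul_pderiv_mem_U (one_mem _) (show i ≤ i - 1 + 1 by omega),
    _, smul_pderiv_mem_U (antideriv_mem_supported hk (hD j).1) (by omega), rfl⟩

theorem derivedSub_U_one [CharZero K] (k : ℕ) : derivedSub K n (U K n 1) k = U K n (k + 1) := by
  induction k with
  | zero => rfl
  | succ k ih =>
    rw [derivedSub, ih]
    exact le_antisymm (lieSpan_U_le _) (U_succ_le_lieSpan (by omega))

theorem map_incl_derivedSeries (L : LieSubalgebra K (DerPn K n)) (k : ℕ) :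
    (LieAlgebra.derivedSeries K L k).toSubmodule.map L.incl.toLinearMap =
      derivedSub K n L.toSubmodule k := by
  induction k with
  | zero =>
    ext D
    simp [derivedSub]
  | succ k ih =>
    rw [LieAlgebra.derivedSeries_def, LieAlgebra.derivedSeriesOfIdeal_succ,
      LieSubmodule.lieIdeal_oper_eq_linear_span', Submodule.map_span, derivedSub, lieSpan,
      ← LieAlgebra.derivedSeries_def, ← ih]
    congr 1
    ext D
    simp only [Set.mem_image, Set.mem_ofPred_eq, Submodule.mem_map]
    constructor
    · rintro ⟨_, ⟨x, hx, y, hy, rfl⟩, rfl⟩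
      exact ⟨x, ⟨x, hx, rfl⟩, y, ⟨y, hy, rfl⟩, rfl⟩
    · rintro ⟨_, ⟨x, hx, rfl⟩, _, ⟨y, hy, rfl⟩, rfl⟩
      exact ⟨⁅(x : L), (y : L)⁆, ⟨x, hx, y, hy, rfl⟩, rfl⟩

theorem mem_derivedSeries_iff (L : LieSubalgebra K (DerPn K n)) (k : ℕ) (x : L) :
    x ∈ LieAlgebra.derivedSeries K L k ↔ (x : DerPn K n) ∈ derivedSub K n L.toSubmodule k := by
  rw [← map_incl_derivedSeries, Submodule.mem_map]
  exact ⟨fun hx => ⟨x, hx, rfl⟩, fun ⟨y, hy, hxy⟩ => Subtype.ext hxy ▸ hy⟩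

end UnitriangularDerivations

theorem hom_preserves_U_general (K : Type) [Field K] [CharZero K] (n : ℕ)
    (L : LieSubalgebra K (DerPn K n)) (hL : L.toSubmodule = U K n 1)
    (φ : L →ₗ⁅K⁆ L) (i : ℕ) (h1 : 1 ≤ i) :
    ∀ x : L, (x : DerPn K n) ∈ U K n i → ((φ x : L) : DerPn K n) ∈ U K n i := by
  obtain ⟨k, rfl⟩ : ∃ k, i = k + 1 := ⟨i - 1, by omega⟩
  have hseries (y : L) :
      y ∈ LieAlgebra.derivedSeries K L k ↔ (y : DerPn K n) ∈ U K n (k + 1) := by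
    rw [mem_derivedSeries_iff, hL, derivedSub_U_one]
  intro x hx
  rw [← hseries] at hx ⊢
  exact LieIdeal.derivedSeries_map_le (f := φ) k (LieIdeal.mem_map hx)

/-- every Lie algebra homomorphism `φ : u_n → u_n` preserves each term
`u_{n,i}` of the derived series. -/
theorem hom_preserves_U (K : Type) [Field K] [CharZero K] (n : ℕ) (hn : 2 ≤ n)
    (L : LieSubalgebra K (DerPn K n)) (hL : L.toSubmodule = U K n 1)
    (φ : L →ₗ⁅K⁆ L) (i : ℕ) (h1 : 1 ≤ i) (h2 : i ≤ n) :
    ∀ x : L, (x : DerPn K n) ∈ U K n i → ((φ x : L) : DerPn K n) ∈ U K n i :=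
  hom_preserves_U_general K n L hL φ i h1
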